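/- (Theorem 1, receive side, high-SNR limit.) Let M = 2d, let H_{kl} ∈ ℂ^{M×M}, and let V_k = [v_k^{(1)},…,v_k^{(d)}], U_k ∈ ℂ^{M×d} satisfy the interference alignment condition: U_k^H H_{kl} V_l = 0 for all l ≠ k and rank(U_k^H H_{kk} V_k) = d for all k. Fix k and set Z̃_k = Σ_{l≠k} H_{kl} V_l V_l^H H_{kl}^H, and assume rank(Z̃_k) = d. For each stream m = 1,…,d set W_{k,m} = Z̃_k + Σ_{j≠m} H_{kk} v_k^{(j)} v_k^{(j)H} H_{kk}^H and assume Π_{W_{k,m}} H_{kk} v_k^{(m)} ≠ 0. Then for each m, the normalized max-SINR receive filter u_k^{(m)}(t) = (I + t W_{k,m})^{-1} H_{kk} v_k^{(m)} / ‖(I + t W_{k,m})^{-1} H_{kk} v_k^{(m)}‖ converges as t → ∞ to a unit vector lying in the column space of U_k; moreover, if the d limit vectors are linearly independent, their span equals the column space of U_k. -/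

import Mathlib

open Matrix Filter
open scoped ComplexOrder

noncomputable def euclNorm {M : ℕ} (v : Fin M → ℂ) : ℝ :=
  Real.sqrt (∑ i, ‖v i‖ ^ 2)

/-!
Write `W` for `W_{k,m}` and `h` for `H_{kk} v_k^{(m)}`. Since `h - Π_W h` is orthogonal to `ker W`,
it lies in the range of the Hermitian matrix `W`, say `h - Π_W h = W y`. The resolvent
`(I + tW)⁻¹` fixes `Π_W h` and is a contraction because `W` is positive semidefinite, so
`‖t (I + tW)⁻¹ W y‖ = ‖y - (I + tW)⁻¹ y‖ ≤ 2‖y‖`; hence `(I + tW)⁻¹ h → Π_W h`, and the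
normalized filters converge to the normalization of `Π_W h`. This vector lies in
`ker W ⊆ ker Z̃_k`, and `ker Z̃_k` is the column space of `U_k`: it contains it by the
alignment condition, and both have dimension `d`.
-/

open WithLp

namespace Matrix

section Algebra

variable {m n p R : Type*}

theorem inv_mulVec_eq_of_mulVec_eq [Fintype n] [DecidableEq n] [CommRing R] {A : Matrix n n R}
    (hA : IsUnit A.det) {x y : n → R} (h : A *ᵥ x = y) : A⁻¹ *ᵥ y = x := by
  rw [← h, mulVec_mulVec, nonsing_inv_mul _ hA, one_mulVec]

theorem mul_conjTranspose_mul_eq_zero [Fintype m] [Fintype n] [NonUnitalRing R] [StarRing R]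
    {X : Matrix m n R} {C : Matrix m p R} (h : Cᴴ * X = 0) : X * Xᴴ * C = 0 := by
  rw [Matrix.mul_assoc, ← conjTranspose_conjTranspose C, ← conjTranspose_mul, h,
    conjTranspose_zero, Matrix.mul_zero]

theorem range_mulVecLin_eq_ker_of_mul_eq_zero [Fintype n] [Fintype p] [Field R]
    {A : Matrix m n R} {B : Matrix n p R} (hAB : A * B = 0)
    (hrank : A.rank + B.rank = Fintype.card n) :
    LinearMap.range B.mulVecLin = LinearMap.ker A.mulVecLin := by
  have hle : LinearMap.range B.mulVecLin ≤ LinearMap.ker A.mulVecLin := by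
    rintro _ ⟨x, rfl⟩
    simp [mulVec_mulVec, hAB]
  refine Submodule.eq_of_le_of_finrank_le hle ?_
  have := A.mulVecLin.finrank_range_add_finrank_ker
  rw [Module.finrank_fintype_fun_eq_card] at this
  change _ ≤ B.rank
  change A.rank + _ = _ at this
  omega

theorem rank_conjTranspose_mul_mul_le [Fintype m] [Fintype n] [Fintype p] [Field R] [PartialOrder R]
    [StarRing R] [StarOrderedRing R]
    (A : Matrix m n R) (B : Matrix m m R) (C : Matrix m p R) :
    (Aᴴ * B * C).rank ≤ A.rank :=
  (rank_mul_le_left _ _).trans ((rank_mul_le_left _ _).trans (rank_conjTranspose A).le)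

end Algebra

section Euclidean

variable {n : Type*} [Fintype n]

theorem PosSemidef.mulVec_eq_zero_of_add_mulVec_eq_zero {𝕜 : Type*} [RCLike 𝕜]
    {A B : Matrix n n 𝕜} (hA : A.PosSemidef) (hB : B.PosSemidef) {x : n → 𝕜}
    (h : (A + B) *ᵥ x = 0) : A *ᵥ x = 0 := by
  have hsum : star x ⬝ᵥ A *ᵥ x + star x ⬝ᵥ B *ᵥ x = 0 := by
    rw [← dotProduct_add, ← add_mulVec, h, dotProduct_zero]
  exact (hA.dotProduct_mulVec_zero_iff x).mp
    ((add_eq_zero_iff_of_nonneg (hA.dotProduct_mulVec_nonneg x)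
      (hB.dotProduct_mulVec_nonneg x)).mp hsum).1

theorem IsHermitian.mem_range_mulVecLin_of_orthogonal_ker {𝕜 : Type*} [RCLike 𝕜] [DecidableEq n]
    {W : Matrix n n 𝕜} (hW : W.IsHermitian) {q : n → 𝕜}
    (hq : ∀ y, W *ᵥ y = 0 → star y ⬝ᵥ q = 0) :
    q ∈ LinearMap.range W.mulVecLin := by
  have hq' : toLp 2 q ∈ LinearMap.range W.toEuclideanLin := by
    rw [← Submodule.orthogonal_orthogonal (LinearMap.range _),
      (isSymmetric_toEuclideanLin_iff.mpr hW).orthogonal_range, Submodule.mem_orthogonal]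
    intro u hu
    rw [EuclideanSpace.inner_eq_star_dotProduct, dotProduct_comm]
    exact hq _ (congrArg ofLp hu)
  obtain ⟨y, hy⟩ := hq'
  exact ⟨ofLp y, congrArg ofLp hy⟩

theorem re_star_dotProduct_le (x y : n → ℂ) :
    (star x ⬝ᵥ y).re ≤ ‖toLp 2 x‖ * ‖toLp 2 y‖ := by
  rw [dotProduct_comm, ← EuclideanSpace.inner_toLp_toLp]
  exact re_inner_le_norm (𝕜 := ℂ) _ _

theorem PosSemidef.norm_le_norm_add_smul_mulVec {W : Matrix n n ℂ} (hW : W.PosSemidef)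
    {t : ℝ} (ht : 0 ≤ t) (x : n → ℂ) :
    ‖toLp 2 x‖ ≤ ‖toLp 2 (x + (t : ℂ) • (W *ᵥ x))‖ := by
  have hWx : 0 ≤ (star x ⬝ᵥ W *ᵥ x).re :=
    (Complex.nonneg_iff.mp (hW.dotProduct_mulVec_nonneg x)).1
  have hx : (star x ⬝ᵥ x).re = ‖toLp 2 x‖ ^ 2 := by
    rw [dotProduct_comm, ← EuclideanSpace.inner_toLp_toLp]
    exact inner_self_eq_norm_sq (𝕜 := ℂ) _
  have hsq : ‖toLp 2 x‖ ^ 2 ≤ ‖toLp 2 x‖ * ‖toLp 2 (x + (t : ℂ) • (W *ᵥ x))‖ := by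
    calc ‖toLp 2 x‖ ^ 2 ≤ ‖toLp 2 x‖ ^ 2 + t * (star x ⬝ᵥ W *ᵥ x).re :=
          le_add_of_nonneg_right (mul_nonneg ht hWx)
      _ = (star x ⬝ᵥ (x + (t : ℂ) • (W *ᵥ x))).re := by
          simp [dotProduct_add, dotProduct_smul, hx]
      _ ≤ _ := re_star_dotProduct_le _ _
  nlinarith [norm_nonneg (toLp 2 x), norm_nonneg (toLp 2 (x + (t : ℂ) • (W *ᵥ x)))]

variable [DecidableEq n]

theorem PosSemidef.isUnit_det_one_add_smul {W : Matrix n n ℂ}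
    (hW : W.PosSemidef) {t : ℝ} (ht : 0 ≤ t) : IsUnit (1 + (t : ℂ) • W).det :=
  (isUnit_iff_isUnit_det _).mp
    (PosDef.one.add_posSemidef (hW.smul (Complex.zero_le_real.mpr ht))).isUnit

theorem PosSemidef.norm_smul_inv_one_add_smul_mulVec_mulVec_le {W : Matrix n n ℂ}
    (hW : W.PosSemidef) {t : ℝ} (ht : 0 ≤ t) (y : n → ℂ) :
    ‖toLp 2 ((t : ℂ) • ((1 + (t : ℂ) • W)⁻¹ *ᵥ W *ᵥ y))‖ ≤ 2 * ‖toLp 2 y‖ := by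
  set A := 1 + (t : ℂ) • W
  have hA := hW.isUnit_det_one_add_smul ht
  have hAx : ∀ x, A *ᵥ x = x + (t : ℂ) • (W *ᵥ x) := fun x => by
    rw [add_mulVec, one_mulVec, smul_mulVec]
  have hs : ‖toLp 2 (A⁻¹ *ᵥ y)‖ ≤ ‖toLp 2 y‖ := by
    have := hW.norm_le_norm_add_smul_mulVec ht (A⁻¹ *ᵥ y)
    rwa [← hAx, mulVec_mulVec, mul_nonsing_inv _ hA, one_mulVec] at this
  have hsmul : (t : ℂ) • (A⁻¹ *ᵥ W *ᵥ y) = y - A⁻¹ *ᵥ y := by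
    have hWy : (t : ℂ) • (W *ᵥ y) = A *ᵥ y - y := by rw [hAx, add_sub_cancel_left]
    rw [← mulVec_smul, hWy, mulVec_sub, inv_mulVec_eq_of_mulVec_eq hA rfl]
  calc ‖toLp 2 ((t : ℂ) • (A⁻¹ *ᵥ W *ᵥ y))‖ = ‖toLp 2 y - toLp 2 (A⁻¹ *ᵥ y)‖ := by
        rw [hsmul, toLp_sub]
    _ ≤ ‖toLp 2 y‖ + ‖toLp 2 (A⁻¹ *ᵥ y)‖ := norm_sub_le _ _
    _ ≤ 2 * ‖toLp 2 y‖ := by linarith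

theorem PosSemidef.tendsto_inv_one_add_smul_mulVec_mulVec {W : Matrix n n ℂ}
    (hW : W.PosSemidef) (y : n → ℂ) :
    Tendsto (fun t : ℝ => (1 + (t : ℂ) • W)⁻¹ *ᵥ W *ᵥ y) atTop (nhds 0) := by
  have hbound : ∀ᶠ t : ℝ in atTop,
      ‖toLp 2 ((1 + (t : ℂ) • W)⁻¹ *ᵥ W *ᵥ y)‖ ≤ 2 * ‖toLp 2 y‖ * t⁻¹ := by
    filter_upwards [eventually_gt_atTop 0] with t ht
    have h := hW.norm_smul_inv_one_add_smul_mulVec_mulVec_le ht.le y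
    rw [toLp_smul, norm_smul, Complex.norm_real, Real.norm_of_nonneg ht.le] at h
    rwa [le_mul_inv_iff₀ ht, mul_comm]
  have hlim : Tendsto (fun t : ℝ => toLp 2 ((1 + (t : ℂ) • W)⁻¹ *ᵥ W *ᵥ y)) atTop (nhds 0) :=
    squeeze_zero_norm' hbound (by simpa using tendsto_inv_atTop_zero.const_mul (2 * ‖toLp 2 y‖))
  exact ((PiLp.continuous_ofLp 2 _).tendsto 0).comp hlim

theorem PosSemidef.tendsto_inv_one_add_smul_mulVec {W : Matrix n n ℂ} (hW : W.PosSemidef)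
    {v p : n → ℂ} (hp : W *ᵥ p = 0) (hvp : ∀ y, W *ᵥ y = 0 → star y ⬝ᵥ (v - p) = 0) :
    Tendsto (fun t : ℝ => (1 + (t : ℂ) • W)⁻¹ *ᵥ v) atTop (nhds p) := by
  obtain ⟨y, hy⟩ := hW.isHermitian.mem_range_mulVecLin_of_orthogonal_ker hvp
  have hsplit : ∀ᶠ t : ℝ in atTop,
      p + (1 + (t : ℂ) • W)⁻¹ *ᵥ W *ᵥ y = (1 + (t : ℂ) • W)⁻¹ *ᵥ v := by
    filter_upwards [eventually_ge_atTop 0] with t ht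
    have hAp : (1 + (t : ℂ) • W) *ᵥ p = p := by
      rw [add_mulVec, one_mulVec, smul_mulVec, hp, smul_zero, add_zero]
    rw [← inv_mulVec_eq_of_mulVec_eq (hW.isUnit_det_one_add_smul ht) hAp, ← mulVec_add]
    congr 1
    rw [← mulVecLin_apply, hy, add_sub_cancel]
  simpa using (tendsto_const_nhds.add (hW.tendsto_inv_one_add_smul_mulVec_mulVec y)).congr' hsplit

end Euclidean

end Matrix

theorem euclNorm_eq_norm_toLp {M : ℕ} (v : Fin M → ℂ) : euclNorm v = ‖toLp 2 v‖ := by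
  rw [EuclideanSpace.norm_eq, euclNorm]

theorem continuous_euclNorm {M : ℕ} : Continuous (euclNorm (M := M)) := by
  simp_rw [funext euclNorm_eq_norm_toLp]
  exact continuous_norm.comp (PiLp.continuous_toLp 2 _)

theorem euclNorm_ne_zero {M : ℕ} {v : Fin M → ℂ} (hv : v ≠ 0) : euclNorm v ≠ 0 := by
  simpa [euclNorm_eq_norm_toLp] using hv

theorem euclNorm_inv_smul_self {M : ℕ} {v : Fin M → ℂ} (hv : v ≠ 0) :
    euclNorm ((euclNorm v)⁻¹ • v) = 1 := by
  rw [euclNorm_eq_norm_toLp, euclNorm_eq_norm_toLp, toLp_smul]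
  exact norm_smul_inv_norm (𝕜 := ℝ) (by simpa using hv)

theorem Filter.Tendsto.inv_euclNorm_smul {α : Type*} {M : ℕ} {l : Filter α}
    {f : α → Fin M → ℂ} {v : Fin M → ℂ} (hf : Tendsto f l (nhds v)) (hv : v ≠ 0) :
    Tendsto (fun a => (euclNorm (f a))⁻¹ • f a) l (nhds ((euclNorm v)⁻¹ • v)) :=
  (((continuous_euclNorm.tendsto v).comp hf).inv₀ (euclNorm_ne_zero hv)).smul hf


theorem maxSINR_receive_filters_align_general
    {K d : ℕ}
    (H : Fin K → Fin K → Matrix (Fin (2 * d)) (Fin (2 * d)) ℂ)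
    (V U : Fin K → Matrix (Fin (2 * d)) (Fin d) ℂ)
    (hIA1 : ∀ k l : Fin K, l ≠ k → (U k)ᴴ * H k l * V l = 0)
    (hIA2 : ∀ k : Fin K, ((U k)ᴴ * H k k * V k).rank = d)
    (k : Fin K)
    (Z : Matrix (Fin (2 * d)) (Fin (2 * d)) ℂ)
    (hZ : Z = ∑ l ∈ Finset.univ.filter (· ≠ k), H k l * V l * (V l)ᴴ * (H k l)ᴴ)
    (hZrank : Z.rank = d)
    (hv : Fin d → (Fin (2 * d) → ℂ))
    (W : Fin d → Matrix (Fin (2 * d)) (Fin (2 * d)) ℂ)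
    (hW : ∀ m, W m = Z + ∑ j ∈ Finset.univ.filter (· ≠ m),
        vecMulVec (hv j) (star (hv j)))
    (P : Fin d → Matrix (Fin (2 * d)) (Fin (2 * d)) ℂ)
    (hP1 : ∀ m (x : Fin (2 * d) → ℂ), (W m).mulVec ((P m).mulVec x) = 0)
    (hP2 : ∀ m (x y : Fin (2 * d) → ℂ),
        (W m).mulVec y = 0 → star y ⬝ᵥ (x - (P m).mulVec x) = 0)
    (hPh : ∀ m, (P m).mulVec (hv m) ≠ 0)
    (ulim : Fin d → (Fin (2 * d) → ℂ))
    (hulim : ∀ m, ulim m = (euclNorm ((P m).mulVec (hv m)))⁻¹ • (P m).mulVec (hv m)) :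
    (∀ m : Fin d,
      Tendsto
        (fun t : ℝ =>
          (euclNorm ((1 + (t : ℂ) • W m)⁻¹.mulVec (hv m)))⁻¹ •
            ((1 + (t : ℂ) • W m)⁻¹.mulVec (hv m)))
        atTop (nhds (ulim m)) ∧
      euclNorm (ulim m) = 1 ∧
      ulim m ∈ LinearMap.range (U k).mulVecLin) ∧
    (LinearIndependent ℂ ulim →
      Submodule.span ℂ (Set.range ulim) = LinearMap.range (U k).mulVecLin) := by
  have hZ' : Z = ∑ l ∈ Finset.univ.filter (· ≠ k), (H k l * V l) * (H k l * V l)ᴴ := by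
    simp only [hZ, conjTranspose_mul, Matrix.mul_assoc]
  have hZpsd : Z.PosSemidef :=
    hZ' ▸ posSemidef_sum _ fun l _ => posSemidef_self_mul_conjTranspose _
  have hSpsd (m : Fin d) : (∑ j ∈ Finset.univ.filter (· ≠ m),
      vecMulVec (hv j) (star (hv j))).PosSemidef :=
    posSemidef_sum _ fun j _ => posSemidef_vecMulVec_self_star _
  have hWpsd (m : Fin d) : (W m).PosSemidef := hW m ▸ hZpsd.add (hSpsd m)
  have hUrank : (U k).rank = d :=
    le_antisymm (rank_le_width _) ((hIA2 k).symm.le.trans (rank_conjTranspose_mul_mul_le _ _ _))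
  have hUZ : LinearMap.range (U k).mulVecLin = LinearMap.ker Z.mulVecLin := by
    refine range_mulVecLin_eq_ker_of_mul_eq_zero ?_ (by simp [hZrank, hUrank, two_mul])
    rw [hZ', Matrix.sum_mul]
    exact Finset.sum_eq_zero fun l hl =>
      mul_conjTranspose_mul_eq_zero (by
        rw [← Matrix.mul_assoc, hIA1 k l (Finset.mem_filter.mp hl).2])
  have hmem (m : Fin d) : (P m) *ᵥ hv m ∈ LinearMap.range (U k).mulVecLin := by
    rw [hUZ]
    exact hZpsd.mulVec_eq_zero_of_add_mulVec_eq_zero (hSpsd m) (hW m ▸ hP1 m (hv m))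
  refine ⟨fun m => ?_, fun hli => ?_⟩
  · rw [hulim m]
    refine ⟨?_, euclNorm_inv_smul_self (hPh m), Submodule.smul_of_tower_mem _ _ (hmem m)⟩
    exact ((hWpsd m).tendsto_inv_one_add_smul_mulVec (hP1 m _) (hP2 m _)).inv_euclNorm_smul
      (hPh m)
  · refine Submodule.eq_of_le_of_finrank_le ?_ ?_
    · exact Submodule.span_le.mpr (Set.range_subset_iff.mpr fun m => hulim m ▸
        Submodule.smul_of_tower_mem _ _ (hmem m))
    · rw [finrank_span_eq_card hli, Fintype.card_fin]
      exact hUrank.le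

/-- Theorem 1, receive side, high-SNR limit: under interference alignment (with `M = 2d`
and interference covariance of rank `d`), each normalized max-SINR receive filter
`(I + t W_{k,m})⁻¹ H_{kk} v_k^{(m)} / ‖·‖` converges as `t → ∞` to a unit vector in the
column space of `U k`; if the `d` limit vectors are linearly independent, their span
equals the column space of `U k`.  Here `P m` is the matrix of the orthogonal projection
onto `ker (W m)`. -/
theorem maxSINR_receive_filters_align
    {K d : ℕ}
    (H : Fin K → Fin K → Matrix (Fin (2 * d)) (Fin (2 * d)) ℂ)
    (V U : Fin K → Matrix (Fin (2 * d)) (Fin d) ℂ)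
    (hIA1 : ∀ k l : Fin K, l ≠ k → (U k)ᴴ * H k l * V l = 0)
    (hIA2 : ∀ k : Fin K, ((U k)ᴴ * H k k * V k).rank = d)
    (k : Fin K)
    (Z : Matrix (Fin (2 * d)) (Fin (2 * d)) ℂ)
    (hZ : Z = ∑ l ∈ Finset.univ.filter (· ≠ k), H k l * V l * (V l)ᴴ * (H k l)ᴴ)
    (hZrank : Z.rank = d)
    (hv : Fin d → (Fin (2 * d) → ℂ))
    (hhv : ∀ m, hv m = (H k k).mulVec (fun i => V k i m))
    (W : Fin d → Matrix (Fin (2 * d)) (Fin (2 * d)) ℂ)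
    (hW : ∀ m, W m = Z + ∑ j ∈ Finset.univ.filter (· ≠ m),
        vecMulVec (hv j) (star (hv j)))
    (P : Fin d → Matrix (Fin (2 * d)) (Fin (2 * d)) ℂ)
    (hP1 : ∀ m (x : Fin (2 * d) → ℂ), (W m).mulVec ((P m).mulVec x) = 0)
    (hP2 : ∀ m (x y : Fin (2 * d) → ℂ),
        (W m).mulVec y = 0 → star y ⬝ᵥ (x - (P m).mulVec x) = 0)
    (hPh : ∀ m, (P m).mulVec (hv m) ≠ 0)
    (ulim : Fin d → (Fin (2 * d) → ℂ))
    (hulim : ∀ m, ulim m = (euclNorm ((P m).mulVec (hv m)))⁻¹ • (P m).mulVec (hv m)) :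
    (∀ m : Fin d,
      Tendsto
        (fun t : ℝ =>
          (euclNorm ((1 + (t : ℂ) • W m)⁻¹.mulVec (hv m)))⁻¹ •
            ((1 + (t : ℂ) • W m)⁻¹.mulVec (hv m)))
        atTop (nhds (ulim m)) ∧
      euclNorm (ulim m) = 1 ∧
      ulim m ∈ LinearMap.range (U k).mulVecLin) ∧
    (LinearIndependent ℂ ulim →
      Submodule.span ℂ (Set.range ulim) = LinearMap.range (U k).mulVecLin) :=
  maxSINR_receive_filters_align_general H V U hIA1 hIA2 k Z hZ hZrank hv W hW P hP1 hP2 hPh ulim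
    hulim
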